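/- arXiv:1112.1288 — 7 statements merged into one kernel-verified Lean document; each statement's English description precedes it below -/
import Mathlib

section
/- Let 𝔤 be a finite-dimensional real Lie algebra and let Y ∈ 𝔤 be nonzero. There exists an inner product on 𝔤 for which Y is a geodesic if and only if there does not exist X ∈ 𝔤 with [X,Y] = Y. -/
/-! If `Y` is not in the image `[𝔤, Y]` of `ad Y`, choose a functional `f` vanishing on that image
with `f Y = 1`, and let `P = id - f(·) Y` be the projection onto `ker f` along `Y`. For any inner
product `B₀`, the form `f x f y + B₀ (P x) (P y)` is an inner product for which `Y` is orthogonal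
to `[𝔤, Y]`. Conversely, `[X, Y] = Y` would force `⟨Y, Y⟩ = ⟨[X, Y], Y⟩ = 0`. -/

section InnerProducts

variable {E : Type*} [AddCommGroup E] [Module ℝ E] [FiniteDimensional ℝ E]

lemma exists_symm_posDef_bilin :
    ∃ B : E →ₗ[ℝ] E →ₗ[ℝ] ℝ, (∀ x y, B x y = B y x) ∧ ∀ x, x ≠ 0 → 0 < B x x := by
  let e : E ≃ₗ[ℝ] EuclideanSpace ℝ (Fin (Module.finrank ℝ E)) :=
    LinearEquiv.ofFinrankEq _ _ (by simp)
  exact ⟨(innerₗ _).compl₁₂ e.toLinearMap e.toLinearMap, fun x y => real_inner_comm (e y) (e x),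
    fun x hx => real_inner_self_pos.2 (e.map_ne_zero_iff.2 hx)⟩

lemma exists_symm_posDef_bilin_apply_eq_zero_of_notMem {V : Submodule ℝ E} {Y : E} (hY : Y ∉ V) :
    ∃ B : E →ₗ[ℝ] E →ₗ[ℝ] ℝ, (∀ x y, B x y = B y x) ∧ (∀ x, x ≠ 0 → 0 < B x x) ∧
      ∀ v ∈ V, B v Y = 0 := by
  obtain ⟨f, hfV, hfY⟩ := LinearMap.exists_extend_of_notMem (0 : V →ₗ[ℝ] ℝ) hY 1
  have hfV' : ∀ v ∈ V, f v = 0 := fun v hv => by simpa using congr($hfV ⟨v, hv⟩)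
  obtain ⟨B₀, hB₀symm, hB₀pos⟩ := exists_symm_posDef_bilin (E := E)
  let P : E →ₗ[ℝ] E := LinearMap.id - f.smulRight Y
  have hP : ∀ x, P x = x - f x • Y := fun x => rfl
  have hB₀nonneg : ∀ x, 0 ≤ B₀ x x := fun x => by
    rcases eq_or_ne x 0 with rfl | hx
    · simp
    · exact (hB₀pos x hx).le
  refine ⟨(LinearMap.mul ℝ ℝ).compl₁₂ f f + B₀.compl₁₂ P P, fun x y => ?_, fun x hx => ?_,
    fun v hv => ?_⟩
  · simp only [LinearMap.add_apply, LinearMap.compl₁₂_apply, LinearMap.mul_apply', mul_comm,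
      hB₀symm (P x)]
  · simp only [LinearMap.add_apply, LinearMap.compl₁₂_apply, LinearMap.mul_apply']
    by_cases hfx : f x = 0
    · simpa [hP, hfx] using hB₀pos x hx
    · exact add_pos_of_pos_of_nonneg (mul_self_pos.2 hfx) (hB₀nonneg _)
  · simp [hP, hfY, hfV' v hv]

end InnerProducts

/-- For a nonzero element `Y` of a finite-dimensional real Lie algebra `g`,
there exists an inner product on `g` making `Y` a geodesic if and only if there is no
`X ∈ g` with `[X,Y] = Y`. -/
theorem exists_innerProduct_geodesic_iff
    (g : Type*) [LieRing g] [LieAlgebra ℝ g] [FiniteDimensional ℝ g]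
    (Y : g) (hY : Y ≠ 0) :
    (∃ B : g →ₗ[ℝ] g →ₗ[ℝ] ℝ,
      (∀ x y : g, B x y = B y x) ∧ (∀ x : g, x ≠ 0 → 0 < B x x) ∧
      (∀ X : g, B ⁅X, Y⁆ Y = 0)) ↔
    ¬ ∃ X : g, ⁅X, Y⁆ = Y := by
  have mem_range_ad : ∀ X : g, ⁅X, Y⁆ ∈ LinearMap.range (LieAlgebra.ad ℝ g Y) := fun X =>
    ⟨-X, by rw [LieAlgebra.ad_apply, lie_neg, lie_skew]⟩
  constructor
  · rintro ⟨B, -, hpos, hgeo⟩ ⟨X, hX⟩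
    exact (hpos Y hY).ne' (by simpa [hX] using hgeo X)
  · intro hnot
    have hYV : Y ∉ LinearMap.range (LieAlgebra.ad ℝ g Y) := by
      rintro ⟨X, hX⟩
      exact hnot ⟨-X, by rw [neg_lie, lie_skew]; exact hX⟩
    obtain ⟨B, hsymm, hpos, horth⟩ := exists_symm_posDef_bilin_apply_eq_zero_of_notMem hYV
    exact ⟨B, hsymm, hpos, fun X => horth _ (mem_range_ad X)⟩
end

section
/- Let 𝔤 be a finite-dimensional real Lie algebra. The following conditions are equivalent: (a) there exists an inner product on 𝔤 for which every nonzero element of 𝔤 is a geodesic; (b) there exist Lie ideals 𝔞 and 𝔰 of 𝔤 such that 𝔤 is the internal direct sum of 𝔞 and 𝔰, the ideal 𝔞 is abelian, and the Killing form of 𝔰 is negative definite (i.e. 𝔰 is semisimple of compact type). -/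
/-!
For a symmetric form `B`, polarizing the geodesic condition `B ⁅X, Y⁆ Y = 0` shows that it is
equivalent to ad-invariance of `B`. Given an ad-invariant inner product, the orthogonal complement
`𝔰` of the centre is an ideal on which every `ad x` is skew, so that
`κ(x, x) = tr (ad x)² = -∑ ‖⁅x, eᵢ⁆‖² < 0` unless `ad x` vanishes on `𝔰`; but then `x` is central,
hence `x = 0`. Conversely, on `𝔞 ⊕ 𝔰` the two projections are Lie algebra homomorphisms, so the
sum of any inner product on the abelian factor `𝔞` and of `-κ` on `𝔰` is ad-invariant.
-/

open LinearMap (BilinForm)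

namespace LinearMap.BilinForm

variable {V : Type*} [AddCommGroup V] [Module ℝ V] {B : BilinForm ℝ V}

theorem apply_self_nonneg_of_pos (hpos : ∀ x, x ≠ 0 → 0 < B x x) (x : V) : 0 ≤ B x x := by
  rcases eq_or_ne x 0 with rfl | hx
  · simp
  · exact (hpos x hx).le

abbrev toInnerProductSpaceCore (hB : B.IsSymm) (hpos : ∀ x, x ≠ 0 → 0 < B x x) :
    InnerProductSpace.Core ℝ V where
  inner x y := B x y
  conj_inner_symm x y := hB.eq y x
  re_inner_nonneg := apply_self_nonneg_of_pos hpos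
  add_left x y z := by simp
  smul_left x y r := by simp
  definite x hx := by
    by_contra hne
    exact (hpos x hne).ne' hx

variable [FiniteDimensional ℝ V]

theorem exists_isSymm_pos : ∃ B : BilinForm ℝ V, B.IsSymm ∧ ∀ x, x ≠ 0 → 0 < B x x := by
  let e := LinearEquiv.ofFinrankEq V (EuclideanSpace ℝ (Fin (Module.finrank ℝ V)))
    finrank_euclideanSpace_fin.symm
  refine ⟨(innerₗ _).compl₁₂ e.toLinearMap e.toLinearMap, ⟨fun x y ↦ ?_⟩, fun x hx ↦ ?_⟩
  · exact real_inner_comm (e y) (e x)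
  · exact real_inner_self_pos.mpr (e.map_ne_zero_iff.mpr hx)

theorem isCompl_orthogonal_of_pos (hB : B.IsSymm) (hpos : ∀ x, x ≠ 0 → 0 < B x x)
    (W : Submodule ℝ V) : IsCompl W (B.orthogonal W) := by
  refine (isCompl_orthogonal_iff_disjoint hB.isRefl).mpr (Submodule.disjoint_def.mpr ?_)
  intro x hxW hxW'
  by_contra hx
  exact (hpos x hx).ne' (hxW' x hxW)

theorem trace_comp_self_neg (hB : B.IsSymm) (hpos : ∀ x, x ≠ 0 → 0 < B x x) {f : V →ₗ[ℝ] V}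
    (hf : ∀ x y, B (f x) y = -B x (f y)) (hf0 : f ≠ 0) : trace ℝ V (f ∘ₗ f) < 0 := by
  let core := toInnerProductSpaceCore hB hpos
  let _ : NormedAddCommGroup V := core.toNormedAddCommGroup
  let _ : InnerProductSpace ℝ V := .ofCore core.toCore
  let b := stdOrthonormalBasis ℝ V
  obtain ⟨i, hi⟩ : ∃ i, f (b i) ≠ 0 := by
    by_contra! h
    exact hf0 (b.toBasis.ext fun i ↦ by simpa using h i)
  calc trace ℝ V (f ∘ₗ f) = ∑ i, B (b i) (f (f (b i))) := trace_eq_sum_inner _ b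
    _ = -∑ i, B (f (b i)) (f (b i)) := by
      rw [← Finset.sum_neg_distrib]
      exact Finset.sum_congr rfl fun j _ ↦ by rw [hB.eq, hf]
    _ < 0 := neg_neg_of_pos <| Finset.sum_pos' (fun j _ ↦ real_inner_self_nonneg (x := f (b j)))
        ⟨i, Finset.mem_univ i, hpos _ hi⟩

end LinearMap.BilinForm

namespace LinearMap.BilinForm

variable {R L : Type*} [CommRing R] [LieRing L] [LieAlgebra R L] {B : BilinForm R L}

theorem lieInvariant_iff_lie_apply_self_eq_zero [IsAddTorsionFree R]
    (hB : B.IsSymm) : B.lieInvariant L ↔ ∀ Y : L, Y ≠ 0 → ∀ X : L, B ⁅X, Y⁆ Y = 0 := by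
  have hiff : B.lieInvariant L ↔ ∀ X Y : L, B ⁅X, Y⁆ Y = 0 := by
    refine ⟨fun hinv X Y ↦ ?_, fun h X Y Z ↦ ?_⟩
    · have h := hinv X Y Y
      rw [hB.eq Y] at h
      exact self_eq_neg.mp h
    · have hYZ := h X (Y + Z)
      simp only [lie_add, map_add, LinearMap.add_apply, h, zero_add, add_zero] at hYZ
      rw [← hB.eq ⁅X, Z⁆, ← add_eq_zero_iff_eq_neg, add_comm, hYZ]
  refine hiff.trans ⟨fun h Y _ X ↦ h X Y, fun h X Y ↦ ?_⟩
  rcases eq_or_ne Y 0 with rfl | hY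
  · simp
  · exact h Y hY X

theorem lieInvariant_of_isLieAbelian [IsLieAbelian L] (B : BilinForm R L) :
    B.lieInvariant L := fun x y z ↦ by simp [trivial_lie_zero]

theorem lieInvariant.compl₁₂ {L' : Type*} [LieRing L'] [LieAlgebra R L']
    {Φ : BilinForm R L'} (hΦ : Φ.lieInvariant L') (f : L →ₗ⁅R⁆ L') :
    lieInvariant L (Φ.compl₁₂ (f : L →ₗ[R] L') (f : L →ₗ[R] L')) := fun x y z ↦ by
  simpa using hΦ (f x) (f y) (f z)

theorem lieInvariant.add {B' : BilinForm R L} (hB : B.lieInvariant L)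
    (hB' : B'.lieInvariant L) : (B + B').lieInvariant L := fun x y z ↦ by
  simp [hB x y z, hB' x y z, add_comm]

theorem lieInvariant.neg (hB : B.lieInvariant L) : (-B).lieInvariant L :=
  fun x y z ↦ by simp [hB x y z]

end LinearMap.BilinForm

namespace LieIdeal

variable {R L : Type*} [CommRing R] [LieRing L] [LieAlgebra R L] {I J : LieIdeal R L}

noncomputable def projectionOnto (h : IsCompl I J) : L →ₗ⁅R⁆ I where
  __ := I.toSubmodule.projectionOnto J.toSubmodule (LieSubmodule.isCompl_toSubmodule.mpr h)
  map_lie' {x y} := by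
    have h' := LieSubmodule.isCompl_toSubmodule.mpr h
    let p := I.toSubmodule.projectionOnto J.toSubmodule h'
    let xJ := J.toSubmodule.projection I.toSubmodule h'.symm x
    let yJ := J.toSubmodule.projection I.toSubmodule h'.symm y
    have hx : (p x : L) + xJ = x := Submodule.projection_add_projection_eq_self h' x
    have hy : (p y : L) + yJ = y := Submodule.projection_add_projection_eq_self h' y
    have hJ : ⁅(p x : L), yJ⁆ + ⁅xJ, y⁆ ∈ J :=
      add_mem (J.lie_mem (Submodule.projection_apply_mem _ y))
        (lie_mem_left R L J _ _ (Submodule.projection_apply_mem _ x))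
    have hsplit : ⁅x, y⁆ = ⁅(p x : L), (p y : L)⁆ + (⁅(p x : L), yJ⁆ + ⁅xJ, y⁆) :=
      calc ⁅x, y⁆ = ⁅(p x : L) + xJ, (p y : L) + yJ⁆ := by rw [hx, hy]
        _ = _ := by rw [add_lie, lie_add, hy, add_assoc]
    apply Subtype.ext
    change (p ⁅x, y⁆ : L) = ⁅(p x : L), (p y : L)⁆
    rw [hsplit, map_add, Submodule.projectionOnto_apply_of_mem_right h' hJ, add_zero,
      Submodule.projectionOnto_apply_of_mem_left h' (lie_mem_left R L I _ _ (p x).2)]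

end LieIdeal

namespace LieAlgebra

section

variable {R L : Type*} [CommRing R] [LieRing L] [LieAlgebra R L]

theorem mem_center_of_forall_lie_eq_zero {I : LieIdeal R L} (h : center R L ⊔ I = ⊤) {x : L}
    (hx : ∀ y ∈ I, ⁅x, y⁆ = 0) : x ∈ center R L := by
  rw [LieModule.mem_maxTrivSubmodule]
  intro y
  obtain ⟨z, hz, w, hw, rfl⟩ := LieSubmodule.mem_sup _ _ y |>.mp (h ▸ LieSubmodule.mem_top y)
  rw [add_lie, ← lie_skew z, ← lie_skew w, (LieModule.mem_maxTrivSubmodule R L L z).mp hz x,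
    hx w hw, neg_zero, add_zero]

end

variable {L : Type*} [LieRing L] [LieAlgebra ℝ L] [FiniteDimensional ℝ L] {B : BilinForm ℝ L}
  (hB : B.IsSymm) (hpos : ∀ x, x ≠ 0 → 0 < B x x) (hinv : B.lieInvariant L)

include hB hpos in
theorem isCompl_center_orthogonal :
    IsCompl (center ℝ L) (InvariantForm.orthogonal B hinv (center ℝ L)) :=
  LieSubmodule.isCompl_toSubmodule.mp (B.isCompl_orthogonal_of_pos hB hpos _)

include hB hpos in
theorem killingForm_orthogonal_center_neg (x : InvariantForm.orthogonal B hinv (center ℝ L))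
    (hx : x ≠ 0) : killingForm ℝ (InvariantForm.orthogonal B hinv (center ℝ L)) x x < 0 := by
  have hc := isCompl_center_orthogonal hB hpos hinv
  rw [killingForm_apply_apply]
  refine (B.restrict _).trace_comp_self_neg (hB.restrict _)
    (fun y hy ↦ hpos y (by simpa using hy)) (fun u v ↦ hinv x u v) fun had ↦ hx ?_
  have hxc : (x : L) ∈ center ℝ L := mem_center_of_forall_lie_eq_zero hc.sup_eq_top
    fun y hy ↦ congrArg Subtype.val (LinearMap.congr_fun had ⟨y, hy⟩)
  have hx0 := hc.disjoint.le_bot ((LieSubmodule.mem_inf _ _ _).mpr ⟨hxc, x.2⟩)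
  exact Subtype.ext ((LieSubmodule.mem_bot _).mp hx0)

theorem exists_isSymm_pos_lieInvariant_of_isCompl {a s : LieIdeal ℝ L} (h : IsCompl a s)
    [IsLieAbelian a] (hs : ∀ x : s, x ≠ 0 → killingForm ℝ s x x < 0) :
    ∃ B : BilinForm ℝ L, B.IsSymm ∧ (∀ x, x ≠ 0 → 0 < B x x) ∧ B.lieInvariant L := by
  obtain ⟨Ba, hBa, hBa_pos⟩ := BilinForm.exists_isSymm_pos (V := a)
  let πa := LieIdeal.projectionOnto h
  let πs := LieIdeal.projectionOnto h.symm
  have hBs_pos : ∀ y : s, y ≠ 0 → 0 < (-killingForm ℝ s) y y := fun y hy ↦ by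
    simpa using hs y hy
  refine ⟨Ba.compl₁₂ (πa : L →ₗ[ℝ] a) (πa : L →ₗ[ℝ] a) +
    (-killingForm ℝ s).compl₁₂ (πs : L →ₗ[ℝ] s) (πs : L →ₗ[ℝ] s), ⟨fun x y ↦ ?_⟩, fun x hx ↦ ?_,
    (Ba.lieInvariant_of_isLieAbelian.compl₁₂ πa).add
      ((LieModule.traceForm_lieInvariant ℝ s s).neg.compl₁₂ πs)⟩
  · simp [hBa.eq (πa x), LieModule.traceForm_comm ℝ s s (πs x)]
  · have hdecomp : (πa x : L) + πs x = x :=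
      Submodule.projection_add_projection_eq_self (LieSubmodule.isCompl_toSubmodule.mpr h) x
    have hne : πa x ≠ 0 ∨ πs x ≠ 0 := by
      by_contra! h0
      rw [← hdecomp, h0.1, h0.2] at hx
      simp at hx
    have ha := BilinForm.apply_self_nonneg_of_pos hBa_pos (πa x)
    have hs' := BilinForm.apply_self_nonneg_of_pos hBs_pos (πs x)
    rcases hne with hne | hne
    · exact add_pos_of_pos_of_nonneg (hBa_pos _ hne) hs'
    · exact add_pos_of_nonneg_of_pos ha (hBs_pos _ hne)

end LieAlgebra

open LieAlgebra

/-- A finite-dimensional real Lie algebra `g` admits an inner product for which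
every nonzero element is a geodesic if and only if `g` is the internal direct sum of an
abelian ideal `a` and an ideal `s` whose Killing form is negative definite (i.e. `s` is
semisimple of compact type). -/
theorem exists_innerProduct_all_geodesic_iff_compact_type
    (g : Type*) [LieRing g] [LieAlgebra ℝ g] [FiniteDimensional ℝ g] :
    (∃ B : g →ₗ[ℝ] g →ₗ[ℝ] ℝ,
      (∀ x y : g, B x y = B y x) ∧ (∀ x : g, x ≠ 0 → 0 < B x x) ∧
      (∀ Y : g, Y ≠ 0 → ∀ X : g, B ⁅X, Y⁆ Y = 0)) ↔
    (∃ a s : LieIdeal ℝ g,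
      a ⊔ s = ⊤ ∧ a ⊓ s = ⊥ ∧ IsLieAbelian a ∧
      (∀ x : s, x ≠ 0 → killingForm ℝ s x x < 0)) := by
  constructor
  · rintro ⟨B, hB, hpos, hgeo⟩
    have hB : BilinForm.IsSymm B := BilinForm.isSymm_def.mpr hB
    have hinv := (BilinForm.lieInvariant_iff_lie_apply_self_eq_zero hB).mpr hgeo
    have hc := isCompl_center_orthogonal hB hpos hinv
    exact ⟨center ℝ g, InvariantForm.orthogonal B hinv (center ℝ g), hc.sup_eq_top,
      hc.inf_eq_bot, inferInstance, killingForm_orthogonal_center_neg hB hpos hinv⟩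
  · rintro ⟨a, s, hsup, hinf, _, hs⟩
    obtain ⟨B, hB, hpos, hinv⟩ :=
      exists_isSymm_pos_lieInvariant_of_isCompl (IsCompl.of_eq hinf hsup) hs
    exact ⟨B, hB.eq, hpos, (BilinForm.lieInvariant_iff_lie_apply_self_eq_zero hB).mp hinv⟩
end

section
/- Every metric Lie algebra of positive dimension possesses a geodesic: if 𝔤 is a finite-dimensional real Lie algebra with dim 𝔤 ≥ 1, equipped with an inner product ⟨·,·⟩, then there exists a nonzero Y ∈ 𝔤 such that ⟨[X,Y],Y⟩ = 0 for all X ∈ 𝔤. -/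
/-!
If `g` is nilpotent, any nonzero central element is a geodesic. Otherwise, by Engel's theorem some
`ad Y₀` is not nilpotent, and the level set `S` of `z ↦ charpoly (ad z)` through `Y₀` is closed and
misses `0`. It is invariant under the Lie automorphisms `exp (t • ad X)`, since `ad X` is a
derivation. So a point `Y` of minimal norm on `S` is a geodesic: `t ↦ ‖exp (t • ad X) Y‖²` is
minimal at `t = 0`, where its derivative is `2 ⟪Y, ⁅X, Y⁆⟫`.
-/

open NormedSpace (exp)
open scoped RealInnerProductSpace

theorem NormedSpace.exp_map_bilinear_of_derivation {𝕜 E : Type*} [RCLike 𝕜]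
    [NormedAddCommGroup E] [NormedSpace 𝕜 E] [CompleteSpace E]
    (β : E →L[𝕜] E →L[𝕜] E) {D : E →L[𝕜] E}
    (hD : ∀ u v, D (β u v) = β (D u) v + β u (D v)) (u v : E) :
    exp D (β u v) = β (exp D u) (exp D v) := by
  set P : 𝕜 → E →L[𝕜] E := fun s => exp (s • D)
  -- `s ↦ P (1 - s) (β (P s u) (P s v))` runs from `exp D (β u v)` to `β (exp D u) (exp D v)`
  have hconst : ∀ s, HasDerivAt (fun s => P (1 - s) (β (P s u) (P s v))) 0 s := by
    intro s
    have hP : HasDerivAt (fun s => P (1 - s)) (-(P (1 - s) * D)) s := by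
      simpa [Function.comp_def] using
        (hasDerivAt_exp_smul_const D (1 - s)).scomp s ((hasDerivAt_id s).const_sub 1)
    have hPu := (hasDerivAt_exp_smul_const' D s).clm_apply (hasDerivAt_const s u)
    have hPv := (hasDerivAt_exp_smul_const' D s).clm_apply (hasDerivAt_const s v)
    convert hP.clm_apply (β.hasDerivAt_of_bilinear (fun _ => hPu) (fun _ => hPv)) using 1
    simp only [neg_apply, mul_apply_eq_comp, hD, map_add, neg_add_rev, map_zero, add_zero]
    abel
  simpa [P] using is_const_of_deriv_eq_zero (fun s => (hconst s).differentiableAt)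
    (fun s => (hconst s).deriv) 0 1

theorem ContinuousLinearMap.bijective_exp {𝕜 E : Type*} [RCLike 𝕜]
    [NormedAddCommGroup E] [NormedSpace 𝕜 E] [CompleteSpace E] (D : E →L[𝕜] E) :
    Function.Bijective (exp D : E →L[𝕜] E) :=
  ContinuousLinearMap.isUnit_iff_bijective.mp <| NormedSpace.isUnit_exp_of_mem_ball (𝕂 := 𝕜) <|
    (NormedSpace.expSeries_radius_eq_top 𝕜 (E →L[𝕜] E)).symm ▸ edist_lt_top _ _

theorem inner_eq_zero_of_isMinOn_norm {E : Type*} [NormedAddCommGroup E] [InnerProductSpace ℝ E]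
    {S : Set E} {Y v : E} {c : ℝ → E} (hY : IsMinOn norm S Y) (hcS : ∀ᶠ t in nhds 0, c t ∈ S)
    (hc0 : c 0 = Y) (hc : HasDerivAt c v 0) : ⟪Y, v⟫ = 0 := by
  have hmin : IsLocalMin (fun t => ‖c t‖ ^ 2) 0 := hcS.mono fun t ht => by
    simp only [hc0]
    gcongr
    exact isMinOn_iff.mp hY _ ht
  have := hmin.hasDerivAt_eq_zero hc.norm_sq
  rw [hc0] at this
  linarith

theorem IsClosed.exists_isMinOn_norm {E : Type*} [NormedAddCommGroup E] [ProperSpace E]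
    {S : Set E} (hS : IsClosed S) (hne : S.Nonempty) : ∃ Y ∈ S, IsMinOn norm S Y := by
  obtain ⟨Y, hYS, hY⟩ := hS.exists_infDist_eq_dist hne 0
  refine ⟨Y, hYS, fun z hz => ?_⟩
  simpa [hY] using Metric.infDist_le_dist_of_mem (x := 0) hz

theorem LinearMap.isClosed_setOf_charpoly_eq {𝕜 E M : Type*} [NontriviallyNormedField 𝕜]
    [CompleteSpace 𝕜] [NormedAddCommGroup E] [NormedSpace 𝕜 E] [FiniteDimensional 𝕜 E]
    [AddCommGroup M] [Module 𝕜 M] [FiniteDimensional 𝕜 M]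
    (φ : E →ₗ[𝕜] Module.End 𝕜 M) (p : Polynomial 𝕜) :
    IsClosed {x | (φ x).charpoly = p} := by
  let b := Module.finBasis 𝕜 E
  have hcoeff : ∀ i, Continuous fun x => (φ x).charpoly.coeff i := fun i => by
    simp_rw [← φ.polyCharpoly_coeff_eval b, ← b.equivFun_apply]
    exact (MvPolynomial.continuous_eval _).comp
      (LinearMap.continuous_of_finiteDimensional b.equivFun.toLinearMap)
  simp_rw [Polynomial.ext_iff, Set.ofPred_forall]
  exact isClosed_iInter fun i => isClosed_eq (hcoeff i) continuous_const

abbrev LinearMap.BilinForm.innerProductCore {M : Type*} [AddCommGroup M] [Module ℝ M]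
    (B : LinearMap.BilinForm ℝ M) (hsymm : ∀ x y, B x y = B y x)
    (hpos : ∀ x, x ≠ 0 → 0 < B x x) : InnerProductSpace.Core ℝ M where
  inner x y := B x y
  conj_inner_symm x y := hsymm y x
  re_inner_nonneg x := by
    rcases eq_or_ne x 0 with rfl | hx
    · simp
    · exact (hpos x hx).le
  add_left x y z := by simp
  smul_left x y r := by simp
  definite x hx := by
    by_contra h
    exact (hpos x h).ne' hx

open LieAlgebra

theorem LieAlgebra.charpoly_ad_lieEquiv_apply {R L : Type*} [CommRing R] [LieRing L]
    [LieAlgebra R L] [Module.Finite R L] [Module.Free R L] (e : L ≃ₗ⁅R⁆ L) (x : L) :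
    (ad R L (e x)).charpoly = (ad R L x).charpoly := by
  rw [← conj_ad_apply, LinearEquiv.charpoly_conj]

section LieAlgebra

variable {L : Type*} [LieRing L] [LieAlgebra ℝ L]

def IsGeodesic (B : L →ₗ[ℝ] L →ₗ[ℝ] ℝ) (Y : L) : Prop := Y ≠ 0 ∧ ∀ X : L, B ⁅X, Y⁆ Y = 0

theorem exists_isGeodesic_of_isNilpotent [Nontrivial L] [LieModule.IsNilpotent L L]
    (B : L →ₗ[ℝ] L →ₗ[ℝ] ℝ) : ∃ Y, IsGeodesic B Y := by
  have := LieModule.nontrivial_max_triv_of_isNilpotent ℝ L L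
  obtain ⟨⟨Y, hY⟩, hY0⟩ := exists_ne (0 : LieModule.maxTrivSubmodule ℝ L L)
  refine ⟨Y, by simpa using hY0, fun X => ?_⟩
  rw [LieModule.mem_maxTrivSubmodule] at hY
  simp [hY X]

theorem exists_isGeodesic_of_not_isNilpotent [FiniteDimensional ℝ L]
    (hL : ¬ LieModule.IsNilpotent L L) (B : L →ₗ[ℝ] L →ₗ[ℝ] ℝ)
    (hsymm : ∀ x y : L, B x y = B y x) (hpos : ∀ x : L, x ≠ 0 → 0 < B x x) :
    ∃ Y, IsGeodesic B Y := by
  -- a norm built from `B` inside the proof lives on the additive group of the `LieRing`;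
  -- separate `NormedAddCommGroup` and `LieRing` instances would not be compatible
  let core := LinearMap.BilinForm.innerProductCore B hsymm hpos
  let _ : NormedAddCommGroup L := core.toNormedAddCommGroup
  let _ : InnerProductSpace ℝ L := .ofCore core.toCore
  let adC : L →L[ℝ] L →L[ℝ] L := LinearMap.toContinuousLinearMap
    (LinearMap.toContinuousLinearMap.toLinearMap ∘ₗ (ad ℝ L : L →ₗ[ℝ] Module.End ℝ L))
  have hinv : ∀ x z : L, (ad ℝ L (exp (adC x) z)).charpoly = (ad ℝ L z).charpoly := fun x z =>
    charpoly_ad_lieEquiv_apply (.ofBijective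
      { (exp (adC x) : L →L[ℝ] L).toLinearMap with
        map_lie' := NormedSpace.exp_map_bilinear_of_derivation adC (leibniz_lie x) _ _ }
      (ContinuousLinearMap.bijective_exp _)) z
  obtain ⟨Y₀, hY₀⟩ : ∃ Y₀ : L, ¬ IsNilpotent (ad ℝ L Y₀) :=
    not_forall.mp (mt LieModule.isNilpotent_iff_forall.mpr hL)
  set S := {z : L | (ad ℝ L z).charpoly = (ad ℝ L Y₀).charpoly}
  obtain ⟨Y, hYS, hY⟩ := (LinearMap.isClosed_setOf_charpoly_eq
    (ad ℝ L : L →ₗ[ℝ] Module.End ℝ L) _).exists_isMinOn_norm (⟨Y₀, rfl⟩ : S.Nonempty)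
  have hY0 : Y ≠ 0 := by
    rintro rfl
    apply hY₀
    rw [LinearMap.isNilpotent_iff_charpoly, ← hYS.out, map_zero, LinearMap.charpoly_zero]
  refine ⟨Y, hY0, fun X => ?_⟩
  have hderiv : HasDerivAt (fun t : ℝ => exp (t • adC X) Y) ⁅X, Y⁆ 0 := by
    have := (hasDerivAt_exp_smul_const' (adC X) (0 : ℝ)).clm_apply (hasDerivAt_const _ Y)
    simp only [zero_smul, NormedSpace.exp_zero, map_zero, add_zero] at this
    exact this
  rw [hsymm]
  refine inner_eq_zero_of_isMinOn_norm hY (.of_forall fun t => ?_) (by simp) hderiv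
  rw [← map_smul]
  exact (hinv _ Y).trans hYS

end LieAlgebra

/-- Kaizer: Every metric Lie algebra of positive dimension possesses a
geodesic: there is a nonzero `Y` with `⟨[X,Y],Y⟩ = 0` for all `X`. -/
theorem exists_geodesic
    (g : Type*) [LieRing g] [LieAlgebra ℝ g] [FiniteDimensional ℝ g]
    (hdim : 1 ≤ Module.finrank ℝ g)
    (B : g →ₗ[ℝ] g →ₗ[ℝ] ℝ)
    (hsymm : ∀ x y : g, B x y = B y x)
    (hpos : ∀ x : g, x ≠ 0 → 0 < B x x) :
    ∃ Y : g, Y ≠ 0 ∧ ∀ X : g, B ⁅X, Y⁆ Y = 0 := by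
  have : Nontrivial g := Module.finrank_pos_iff.mp hdim
  by_cases hg : LieModule.IsNilpotent g g
  · exact exists_isGeodesic_of_isNilpotent B
  · exact exists_isGeodesic_of_not_isNilpotent hg B hsymm hpos
end

section
/- Let 𝔤 be a nilpotent metric Lie algebra and let 𝔥 be a totally geodesic subalgebra of 𝔤 of codimension 1. Then 𝔥 is a Lie ideal of 𝔤 and the orthogonal complement 𝔥⊥ is contained in the centre z(𝔤); consequently 𝔤 is the direct sum of the Lie ideals 𝔥 and 𝔥⊥, with 𝔥⊥ one-dimensional and central (so 𝔤 ≅ 𝔥 ⊕ ℝ). -/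
/-!
Since `𝔤` is nilpotent, Engel's theorem makes `𝔤` a nilpotent `𝔥`-module, so a proper subalgebra
is strictly contained in its normalizer; in codimension one the normalizer is therefore all of
`𝔤`, i.e. `𝔥` is an ideal. For `X ⊥ 𝔥`, `ad X` then preserves `𝔥`, and total geodesy says its
restriction is skew-adjoint for the inner product. A nilpotent skew-adjoint map of a definite
form vanishes (`T² v = 0` forces `⟨T v, T v⟩ = 0`), so `ad X` vanishes on `𝔥` and on `X`, which
together span `𝔤`.
-/

namespace LinearMap.IsSkewAdjoint

variable {R M : Type*} [CommRing R] [AddCommGroup M] [Module R M]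
  {B : M →ₗ[R] M →ₗ[R] R} {T : M →ₗ[R] M}

lemma apply_eq_zero_of_sq_apply_eq_zero (hB : ∀ x : M, B x x = 0 → x = 0)
    (hT : B.IsSkewAdjoint T) {v : M} (hv : T (T v) = 0) : T v = 0 := by
  refine hB _ ?_
  rw [hT, Pi.neg_apply, hv, neg_zero, map_zero]

lemma eq_zero_of_isNilpotent (hB : ∀ x : M, B x x = 0 → x = 0)
    (hT : B.IsSkewAdjoint T) (hnil : IsNilpotent T) : T = 0 := by
  obtain ⟨n, hn⟩ := hnil
  have hker_pow : ∀ k : ℕ, ∀ v : M, (T ^ (k + 1)) v = 0 → T v = 0 := by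
    intro k
    induction k with
    | zero => simp
    | succ k ih =>
      intro v hv
      refine apply_eq_zero_of_sq_apply_eq_zero hB hT (ih (T v) ?_)
      rwa [← Module.End.mul_apply, ← pow_succ]
  ext v
  exact hker_pow n v (by rw [pow_succ, Module.End.mul_apply, hn, zero_apply])

end LinearMap.IsSkewAdjoint

lemma Submodule.eq_top_of_lt_of_finrank_add_one {K V : Type*} [DivisionRing K] [AddCommGroup V]
    [Module K V] [FiniteDimensional K V] {W W' : Submodule K V} (hlt : W < W')
    (hW : Module.finrank K W + 1 = Module.finrank K V) : W' = ⊤ :=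
  eq_top_of_finrank_eq <| le_antisymm (finrank_le W') (hW ▸ finrank_lt_finrank_of_lt hlt)

namespace LieSubalgebra

section Noetherian

variable {R L : Type*} [CommRing R] [LieRing L] [LieAlgebra R L] [IsNoetherian R L]
  [LieModule.IsNilpotent L L]

lemma lt_normalizer_of_ne_top {H : LieSubalgebra R L} (hH : H ≠ ⊤) : H < H.normalizer := by
  refine H.le_normalizer.lt_of_ne fun hN ↦ hH ?_
  have : LieModule.IsNilpotent H L := LieModule.isNilpotent_iff_forall'.mpr
    fun y ↦ LieModule.isNilpotent_toEnd_of_isNilpotent R L L (y : L)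
  obtain ⟨k, hk⟩ := (LieModule.isNilpotent_iff_exists_ucs_eq_top R).mp this
  have hN' : H.toLieSubmodule.normalizer = H.toLieSubmodule := by
    rw [← LieSubmodule.toSubmodule_inj, coe_normalizer_eq_normalizer, ← hN, coe_toLieSubmodule]
  have hle := hk ▸ LieSubmodule.ucs_le_of_normalizer_eq_self hN' k
  exact eq_top_iff.mpr fun x _ ↦ (mem_toLieSubmodule x).mp (hle (LieSubmodule.mem_top x))

end Noetherian

section FiniteDimensional

variable {K L : Type*} [Field K] [LieRing L] [LieAlgebra K L] [FiniteDimensional K L]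
  [LieModule.IsNilpotent L L]

lemma lie_mem_of_finrank_add_one {H : LieSubalgebra K L}
    (hH : Module.finrank K H + 1 = Module.finrank K L) (x : L) {y : L} (hy : y ∈ H) :
    ⁅x, y⁆ ∈ H := by
  have hne : H ≠ ⊤ := by
    rintro rfl
    have htop : Module.finrank K (⊤ : Submodule K L) + 1 = Module.finrank K L := hH
    rw [finrank_top] at htop
    omega
  have htop : H.normalizer.toSubmodule = ⊤ :=
    Submodule.eq_top_of_lt_of_finrank_add_one (lt_normalizer_of_ne_top hne) hH
  have hx : x ∈ H.normalizer.toSubmodule := htop ▸ Submodule.mem_top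
  exact (H.mem_normalizer_iff x).mp hx y hy

end FiniteDimensional

end LieSubalgebra

section TotallyGeodesic

variable {K L : Type*} [Field K] [LieRing L] [LieAlgebra K L] [FiniteDimensional K L]
  [LieModule.IsNilpotent L L] {B : L →ₗ[K] L →ₗ[K] K} {H : LieSubalgebra K L} {X : L}

lemma lie_eq_zero_of_totallyGeodesic (hsymm : ∀ x y : L, B x y = B y x)
    (hB : ∀ x : L, B x x = 0 → x = 0) (hH : Module.finrank K H + 1 = Module.finrank K L)
    (htg : ∀ Y ∈ H, ∀ Z ∈ H, B ⁅X, Y⁆ Z + B ⁅X, Z⁆ Y = 0) {Y : L} (hY : Y ∈ H) :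
    ⁅X, Y⁆ = 0 := by
  have hmaps : Set.MapsTo (LieModule.toEnd K L L X) H H := fun Y hY ↦
    H.lie_mem_of_finrank_add_one hH X hY
  set T := (LieModule.toEnd K L L X).restrict hmaps
  have hskew : (B.compl₁₂ H.toSubmodule.subtype H.toSubmodule.subtype).IsSkewAdjoint T := by
    rintro ⟨Y, hY⟩ ⟨Z, hZ⟩
    change B ⁅X, Y⁆ Z = B Y (-⁅X, Z⁆)
    rw [map_neg, hsymm Y, eq_neg_iff_add_eq_zero]
    exact htg Y hY Z hZ
  have hT : T = 0 := hskew.eq_zero_of_isNilpotent (fun Y hY ↦ Subtype.ext (hB Y hY))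
    (Module.End.isNilpotent.restrict hmaps (LieModule.isNilpotent_toEnd_of_isNilpotent K L L X))
  exact congr(($hT ⟨Y, hY⟩ : L))

lemma mem_center_of_totallyGeodesic (hsymm : ∀ x y : L, B x y = B y x)
    (hB : ∀ x : L, B x x = 0 → x = 0) (hH : Module.finrank K H + 1 = Module.finrank K L)
    (htg : ∀ Y ∈ H, ∀ Z ∈ H, B ⁅X, Y⁆ Z + B ⁅X, Z⁆ Y = 0) (hX : ∀ W ∈ H, B X W = 0) :
    X ∈ LieAlgebra.center K L := by
  rcases eq_or_ne X 0 with rfl | hX0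
  · exact zero_mem _
  have hXH : X ∉ H := fun hXH ↦ hX0 (hB X (hX X hXH))
  have hsup : H.toSubmodule ⊔ K ∙ X = ⊤ :=
    Submodule.eq_top_of_lt_of_finrank_add_one (Submodule.lt_sup_iff_notMem.mpr hXH) hH
  have hker : H.toSubmodule ⊔ K ∙ X ≤ LinearMap.ker (LieModule.toEnd K L L X) :=
    sup_le (fun Y hY ↦ lie_eq_zero_of_totallyGeodesic hsymm hB hH htg hY)
      ((Submodule.span_singleton_le_iff_mem _ _).mpr (lie_self X))
  refine (LieModule.mem_maxTrivSubmodule K L L X).mpr fun x ↦ ?_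
  rw [← lie_skew, show ⁅X, x⁆ = 0 from hker (hsup ▸ Submodule.mem_top), neg_zero]

end TotallyGeodesic

/-- A codimension-one totally geodesic subalgebra `h` of a nilpotent metric
Lie algebra `g` is an ideal, and its orthogonal complement is contained in the centre
(hence `g ≅ h ⊕ ℝ` as a direct sum of ideals). -/
theorem codim_one_totallyGeodesic_nilpotent
    (g : Type*) [LieRing g] [LieAlgebra ℝ g] [FiniteDimensional ℝ g]
    [LieModule.IsNilpotent g g]
    (B : g →ₗ[ℝ] g →ₗ[ℝ] ℝ)
    (hsymm : ∀ x y : g, B x y = B y x)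
    (hpos : ∀ x : g, x ≠ 0 → 0 < B x x)
    (h : LieSubalgebra ℝ g)
    (hcodim : Module.finrank ℝ h + 1 = Module.finrank ℝ g)
    (htg : ∀ X : g, (∀ W ∈ h, B X W = 0) →
      ∀ Y ∈ h, ∀ Z ∈ h, B ⁅X, Y⁆ Z + B ⁅X, Z⁆ Y = 0) :
    (∀ x : g, ∀ y ∈ h, ⁅x, y⁆ ∈ h) ∧
      (∀ X : g, (∀ W ∈ h, B X W = 0) → X ∈ LieAlgebra.center ℝ g) := by
  have hB : ∀ x : g, B x x = 0 → x = 0 := fun x hx ↦ by_contra fun hx0 ↦ (hpos x hx0).ne' hx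
  exact ⟨fun x _ hy ↦ h.lie_mem_of_finrank_add_one hcodim x hy,
    fun X hX ↦ mem_center_of_totallyGeodesic hsymm hB hcodim (htg X hX) hX⟩
end

section
/- Let 𝔤 be a metric Lie algebra and let 𝔥 be a totally geodesic subalgebra of 𝔤. Let π⊥ : 𝔤 → 𝔥⊥ denote the orthogonal projection onto 𝔥⊥, and define ψ : 𝔥 → End(𝔥⊥) by ψ(Y)(X) = π⊥([Y,X]) for Y ∈ 𝔥, X ∈ 𝔥⊥. Then ψ is a Lie algebra homomorphism (ψ([Y,Z]) = ψ(Y)∘ψ(Z) − ψ(Z)∘ψ(Y) for all Y, Z ∈ 𝔥), and if 𝔤 is nilpotent then ψ(Y) is a nilpotent endomorphism of 𝔥⊥ for every Y ∈ 𝔥. -/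
/-!
Write `h` for the subalgebra and `P` for the projection onto `h⊥`, so that `x - P x ∈ h` and
`P` kills `h`. For `Y ∈ h` the element `⁅Y, a - P a⁆` lies in `h`, hence `P ⁅Y, P a⁆ = P ⁅Y, a⁆`:
the map `ψ(Y) = P ∘ ad Y` on `h⊥` is induced by `ad Y` on `g` modulo `h`. The homomorphism
property is then the Jacobi identity, and `ψ(Y) ^ n = P ∘ (ad Y) ^ n` on `h⊥`, which vanishes
for large `n` when `g` is nilpotent, since then `ad Y` is nilpotent uniformly in `Y`.
-/

namespace LinearMap.BilinForm

variable {R M : Type*} [CommRing R] [AddCommGroup M] [Module R M]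
  {B : LinearMap.BilinForm R M} (hB : B.toQuadraticMap.Anisotropic) {p : Submodule R M} {P : M →ₗ[R] M}
  (hPorth : ∀ x, ∀ w ∈ p, B (P x) w = 0) (hPsub : ∀ x, x - P x ∈ p)
include hB hPorth hPsub

theorem orthoProj_apply_eq_zero_of_mem {v : M} (hv : v ∈ p) : P v = 0 := by
  have hPv : P v ∈ p := by simpa using p.sub_mem hv (hPsub v)
  exact hB _ (hPorth v _ hPv)

theorem orthoProj_apply_eq_self_of_forall {x : M} (hx : ∀ w ∈ p, B x w = 0) :
    P x = x := by
  have hself : B (x - P x) (x - P x) = 0 := by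
    rw [LinearMap.map_sub₂, hx _ (hPsub x), hPorth x _ (hPsub x), sub_zero]
  exact (sub_eq_zero.mp (hB _ hself)).symm

end LinearMap.BilinForm

namespace LieSubalgebra

variable {R L : Type*} [CommRing R] [LieRing L] [LieAlgebra R L] {h : LieSubalgebra R L}
  {P : L →ₗ[R] L} (hker : ∀ v ∈ h, P v = 0) (hsub : ∀ x, x - P x ∈ h)
include hker hsub

theorem map_lie_map_of_mem {Y : L} (hY : Y ∈ h) (a : L) : P ⁅Y, P a⁆ = P ⁅Y, a⁆ := by
  have hsplit : ⁅Y, a⁆ = ⁅Y, P a⁆ + ⁅Y, a - P a⁆ := by rw [← lie_add, add_sub_cancel]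
  rw [hsplit, map_add, hker _ (h.lie_mem hY (hsub a)), add_zero]

theorem map_lie_lie_of_mem {Y Z : L} (hY : Y ∈ h) (hZ : Z ∈ h) (X : L) :
    P ⁅⁅Y, Z⁆, X⁆ = P ⁅Y, P ⁅Z, X⁆⁆ - P ⁅Z, P ⁅Y, X⁆⁆ := by
  rw [lie_lie, map_sub, map_lie_map_of_mem hker hsub hY, map_lie_map_of_mem hker hsub hZ]

theorem iterate_map_lie_map_of_mem {Y : L} (hY : Y ∈ h) (n : ℕ) (a : L) :
    (fun x : L => P ⁅Y, x⁆)^[n] (P a) = P ((LieAlgebra.ad R L Y ^ n) a) := by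
  induction n generalizing a with
  | zero => rfl
  | succ n ih =>
    rw [Function.iterate_succ_apply, map_lie_map_of_mem hker hsub hY, ih, pow_succ,
      Module.End.mul_apply, LieAlgebra.ad_apply]

end LieSubalgebra

theorem psi_hom_and_nilpotent_general
    (g : Type*) [LieRing g] [LieAlgebra ℝ g]
    (B : g →ₗ[ℝ] g →ₗ[ℝ] ℝ)
    (hpos : ∀ x : g, x ≠ 0 → 0 < B x x)
    (h : LieSubalgebra ℝ g)
    (pperp : g →ₗ[ℝ] g)
    (hproj₁ : ∀ x : g, ∀ w ∈ h, B (pperp x) w = 0)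
    (hproj₂ : ∀ x : g, x - pperp x ∈ h) :
    (∀ Y ∈ h, ∀ Z ∈ h, ∀ X : g, (∀ w ∈ h, B X w = 0) →
      pperp ⁅⁅Y, Z⁆, X⁆ = pperp ⁅Y, pperp ⁅Z, X⁆⁆ - pperp ⁅Z, pperp ⁅Y, X⁆⁆) ∧
    (LieRing.IsNilpotent g →
      ∀ Y ∈ h, ∃ k : ℕ, ∀ X : g, (∀ w ∈ h, B X w = 0) →
        (fun x : g => pperp ⁅Y, x⁆)^[k] X = 0) := by
  have hB : (LinearMap.BilinMap.toQuadraticMap B).Anisotropic :=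
    QuadraticMap.PosDef.anisotropic hpos
  have hker : ∀ v ∈ h, pperp v = 0 := fun v hv =>
    LinearMap.BilinForm.orthoProj_apply_eq_zero_of_mem (p := h.toSubmodule) hB hproj₁ hproj₂ hv
  refine ⟨fun Y hY Z hZ X _ => LieSubalgebra.map_lie_lie_of_mem hker hproj₂ hY hZ X, ?_⟩
  intro _ Y hY
  obtain ⟨k, hk⟩ := LieAlgebra.nilpotent_ad_of_nilpotent_algebra ℝ g
  refine ⟨k, fun X hX => ?_⟩
  rw [← LinearMap.BilinForm.orthoProj_apply_eq_self_of_forall (p := h.toSubmodule) hB hproj₁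
    hproj₂ hX, LieSubalgebra.iterate_map_lie_map_of_mem hker hproj₂ hY, hk Y,
    LinearMap.zero_apply, map_zero]

/-- For a totally geodesic subalgebra `h` of a metric Lie algebra `g`, the map
`ψ : h → End(h⊥)`, `ψ(Y)(X) = π⊥[Y,X]` (where `π⊥` is the orthogonal projection onto
`h⊥`), is a Lie algebra homomorphism, and if `g` is nilpotent then each `ψ(Y)` is a
nilpotent endomorphism of `h⊥`. -/
theorem psi_hom_and_nilpotent
    (g : Type*) [LieRing g] [LieAlgebra ℝ g] [FiniteDimensional ℝ g]
    (B : g →ₗ[ℝ] g →ₗ[ℝ] ℝ)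
    (hsymm : ∀ x y : g, B x y = B y x)
    (hpos : ∀ x : g, x ≠ 0 → 0 < B x x)
    (h : LieSubalgebra ℝ g)
    (htg : ∀ X : g, (∀ W ∈ h, B X W = 0) →
      ∀ Y ∈ h, ∀ Z ∈ h, B ⁅X, Y⁆ Z + B ⁅X, Z⁆ Y = 0)
    (pperp : g →ₗ[ℝ] g)
    (hproj₁ : ∀ x : g, ∀ w ∈ h, B (pperp x) w = 0)
    (hproj₂ : ∀ x : g, x - pperp x ∈ h) :
    (∀ Y ∈ h, ∀ Z ∈ h, ∀ X : g, (∀ w ∈ h, B X w = 0) →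
      pperp ⁅⁅Y, Z⁆, X⁆ = pperp ⁅Y, pperp ⁅Z, X⁆⁆ - pperp ⁅Z, pperp ⁅Y, X⁆⁆) ∧
    (LieRing.IsNilpotent g →
      ∀ Y ∈ h, ∃ k : ℕ, ∀ X : g, (∀ w ∈ h, B X w = 0) →
        (fun x : g => pperp ⁅Y, x⁆)^[k] X = 0) :=
  psi_hom_and_nilpotent_general g B hpos h pperp hproj₁ hproj₂
end

section
/- Let 𝔤 be a nilpotent metric Lie algebra and let 𝔥 be a totally geodesic subalgebra of 𝔤 of codimension 2. Then for every basis {X₁,X₂} of the orthogonal complement 𝔥⊥, the element [X₁,X₂] lies in 𝔥 and moreover lies in the centre of 𝔥, i.e. [[X₁,X₂],Y] = 0 for all Y ∈ 𝔥. -/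
/-!
Choose `u₀, u₁` orthonormal spanning `𝔥⊥` and put `c = [u₀, u₁]`; any `[X₁, X₂]` with
`X₁, X₂ ∈ 𝔥⊥` is a multiple of `c`. Since `𝔤` and `𝔥` are nilpotent, `ad z` is trace-free on `𝔤`,
and for `z ∈ 𝔥` also on `𝔥`; for `z ⊥ 𝔥` total geodesy makes the compression of `ad z` to `𝔥`
skew, hence trace-free as well. Comparing traces gives `∑ᵢ ⟨uᵢ, [z, uᵢ]⟩ = 0` in both cases.
For `z = u₀, u₁` this says `c ⊥ 𝔥⊥`, i.e. `c ∈ 𝔥`. For `z ∈ 𝔥` it cancels the `𝔥⊥`-terms of the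
Jacobi expansion of `⟨[c, Y], Z⟩`, which leaves `⟨P[u₀, Y], P[u₁, Z]⟩ - ⟨P[u₁, Y], P[u₀, Z]⟩`
(`P` the projection onto `𝔥`), antisymmetric in `Y, Z`. So `ad c` is skew and nilpotent on `𝔥`,
hence zero.
-/

open Module LinearMap

section PosDef

variable {M : Type*} [AddCommGroup M] [Module ℝ M]

abbrev innerProductCoreOfPosDef (β : M →ₗ[ℝ] M →ₗ[ℝ] ℝ) (hsymm : ∀ x y, β x y = β y x)
    (hpos : ∀ x, x ≠ 0 → 0 < β x x) : InnerProductSpace.Core ℝ M where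
  inner x y := β x y
  conj_inner_symm x y := by simpa using hsymm y x
  re_inner_nonneg x := by
    obtain rfl | hx := eq_or_ne x 0
    · simp
    · exact (hpos x hx).le
  add_left x y z := by simp
  smul_left x y r := by simp
  definite x hx := by_contra fun hx0 => (hpos x hx0).ne' hx

theorem trace_eq_zero_of_apply_self_eq_zero [FiniteDimensional ℝ M] (β : M →ₗ[ℝ] M →ₗ[ℝ] ℝ)
    (hsymm : ∀ x y, β x y = β y x) (hpos : ∀ x, x ≠ 0 → 0 < β x x) (T : M →ₗ[ℝ] M)
    (hT : ∀ x, β x (T x) = 0) : trace ℝ M T = 0 := by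
  let _ := innerProductCoreOfPosDef β hsymm hpos
  let _ := InnerProductSpace.Core.toNormedAddCommGroup (𝕜 := ℝ) (F := M)
  let _ := InnerProductSpace.ofCore (innerProductCoreOfPosDef β hsymm hpos).toCore
  rw [trace_eq_sum_inner T (stdOrthonormalBasis ℝ M)]
  exact Finset.sum_eq_zero fun i _ => hT _

theorem eq_zero_of_isNilpotent_of_apply_skew (β : M →ₗ[ℝ] M →ₗ[ℝ] ℝ)
    (hpos : ∀ x, x ≠ 0 → 0 < β x x) {T : M →ₗ[ℝ] M} (hT : IsNilpotent T)
    (hskew : ∀ x y, β (T x) y = -β x (T y)) : T = 0 := by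
  have pow_succ_eq_zero : ∀ k, T ^ (k + 2) = 0 → T ^ (k + 1) = 0 := fun k hk => by
    ext x
    by_contra hx
    have hTk : (T ^ (k + 1)) x = T ((T ^ k) x) := by rw [pow_succ', Module.End.mul_apply]
    have hTTk : T (T ((T ^ k) x)) = 0 := by
      rw [← Module.End.mul_apply, ← Module.End.mul_apply, ← pow_two, ← pow_add, add_comm, hk,
        LinearMap.zero_apply]
    have : β ((T ^ (k + 1)) x) ((T ^ (k + 1)) x) = 0 := by
      rw [hTk, hskew, hTTk, map_zero, neg_zero]
    exact (hpos _ hx).ne' this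
  obtain ⟨n, hn⟩ := hT
  have : ∀ k, T ^ (k + 1) = 0 → T = 0 := fun k => by
    induction k with
    | zero => simp
    | succ k ih => exact fun hk => ih (pow_succ_eq_zero k hk)
  exact this n (pow_eq_zero_of_le n.le_succ hn)

end PosDef

section Frame

variable {L : Type*} [AddCommGroup L] [Module ℝ L] {ι : Type*} [Fintype ι]
  (β : L →ₗ[ℝ] L →ₗ[ℝ] ℝ)

def frameOperator (u : ι → L) : L →ₗ[ℝ] L := ∑ i, (β (u i)).smulRight (u i)

@[simp]
theorem frameOperator_apply (u : ι → L) (x : L) :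
    frameOperator β u x = ∑ i, β (u i) x • u i := by
  simp [frameOperator]

/-- `frameOperator β u` is the `β`-orthogonal projection onto `Kᗮ`; when `ι` has `codim K`
elements, `u` is a `β`-orthonormal basis of `Kᗮ`. -/
structure IsParsevalFrameOfOrthogonal (K : Submodule ℝ L) (u : ι → L) : Prop where
  apply_eq_zero : ∀ i, ∀ w ∈ K, β (u i) w = 0
  sub_frameOperator_mem : ∀ x, x - frameOperator β u x ∈ K

namespace IsParsevalFrameOfOrthogonal

variable {β} {K : Submodule ℝ L} {u : ι → L} (hu : IsParsevalFrameOfOrthogonal β K u)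
include hu

def proj : L →ₗ[ℝ] K :=
  (LinearMap.id - frameOperator β u).codRestrict K hu.sub_frameOperator_mem

theorem coe_proj (x : L) : (hu.proj x : L) = x - frameOperator β u x := rfl

theorem frameOperator_eq_zero {w : L} (hw : w ∈ K) : frameOperator β u w = 0 := by
  simp [hu.apply_eq_zero _ w hw]

theorem frameOperator_eq_self (hpos : ∀ x, x ≠ 0 → 0 < β x x) {x : L}
    (hx : ∀ w ∈ K, β x w = 0) : frameOperator β u x = x := by
  set y := x - frameOperator β u x with hy
  have hyK : y ∈ K := hu.sub_frameOperator_mem x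
  have : β y y = 0 := by
    nth_rewrite 1 [hy]
    simp [hx y hyK, hu.apply_eq_zero _ y hyK]
  by_contra hne
  exact (hpos y (sub_ne_zero.mpr (Ne.symm hne))).ne' this

theorem trace_eq [FiniteDimensional ℝ L] (f : L →ₗ[ℝ] L) :
    trace ℝ L f = trace ℝ K (hu.proj ∘ₗ f ∘ₗ K.subtype) + ∑ i, β (u i) (f (u i)) := by
  have hf : f = K.subtype ∘ₗ (hu.proj ∘ₗ f) + ∑ i, (β (u i) ∘ₗ f).smulRight (u i) := by
    ext x
    simp [coe_proj]
  conv_lhs => rw [hf]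
  rw [map_add, trace_comp_comm', map_sum]
  simp [LinearMap.comp_assoc]

end IsParsevalFrameOfOrthogonal

theorem exists_isParsevalFrameOfOrthogonal [FiniteDimensional ℝ L]
    (hsymm : ∀ x y, β x y = β y x) (hpos : ∀ x, x ≠ 0 → 0 < β x x) (K : Submodule ℝ L) {n : ℕ}
    (hK : finrank ℝ K + n = finrank ℝ L) : ∃ u : Fin n → L, IsParsevalFrameOfOrthogonal β K u := by
  let _ := innerProductCoreOfPosDef β hsymm hpos
  let _ := InnerProductSpace.Core.toNormedAddCommGroup (𝕜 := ℝ) (F := L)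
  let _ := InnerProductSpace.ofCore (innerProductCoreOfPosDef β hsymm hpos).toCore
  have hn : finrank ℝ Kᗮ = n := by have := K.finrank_add_finrank_orthogonal; omega
  let b := (stdOrthonormalBasis ℝ Kᗮ).reindex (finCongr hn)
  refine ⟨fun i => b i, ⟨fun i w hw => K.inner_left_of_mem_orthogonal hw (b i).2, fun x => ?_⟩⟩
  have : frameOperator β (fun i => (b i : L)) x = Kᗮ.starProjection x := by
    rw [b.starProjection_eq_sum_rankOne]
    simp only [frameOperator_apply, _root_.sum_apply, InnerProductSpace.rankOne_apply]
    rfl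
  rw [this]
  simpa only [K.orthogonal_orthogonal] using Kᗮ.sub_starProjection_mem_orthogonal x

end Frame

section Lie

theorem lie_smul_add_smul_smul_add_smul {R L : Type*} [CommRing R] [LieRing L] [LieAlgebra R L]
    (a b c d : R) (x y : L) :
    ⁅a • x + b • y, c • x + d • y⁆ = (a * d - b * c) • ⁅x, y⁆ := by
  simp only [add_lie, lie_add, smul_lie, lie_smul, lie_self, smul_zero, sub_smul, mul_smul]
  rw [← lie_skew x y]
  module

variable {L : Type*} [LieRing L] [LieAlgebra ℝ L]

def LieSubalgebra.IsTotallyGeodesic (h : LieSubalgebra ℝ L) (β : L →ₗ[ℝ] L →ₗ[ℝ] ℝ) : Prop :=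
  ∀ X : L, (∀ W ∈ h, β X W = 0) → ∀ Y ∈ h, ∀ Z ∈ h, β ⁅X, Y⁆ Z + β ⁅X, Z⁆ Y = 0

namespace IsParsevalFrameOfOrthogonal

variable {β : L →ₗ[ℝ] L →ₗ[ℝ] ℝ} {h : LieSubalgebra ℝ L} {ι : Type*} [Fintype ι] {u : ι → L}

theorem apply_lie_eq (hsymm : ∀ x y, β x y = β y x) (htg : h.IsTotallyGeodesic β)
    (hu : IsParsevalFrameOfOrthogonal β h.toSubmodule u) {X : L} (hX : ∀ w ∈ h, β X w = 0)
    (V : L) {Z : L} (hZ : Z ∈ h) :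
    β ⁅X, V⁆ Z = -β (hu.proj V) (hu.proj ⁅X, Z⁆) + ∑ i, β (u i) V * β ⁅X, u i⁆ Z := by
  have hV : V = hu.proj V + ∑ i, β (u i) V • u i := by
    rw [coe_proj, frameOperator_apply, sub_add_cancel]
  have hproj : β ⁅X, Z⁆ (hu.proj V) = β (hu.proj V) (hu.proj ⁅X, Z⁆) := by
    rw [hsymm, hu.coe_proj ⁅X, Z⁆, frameOperator_apply, map_sub, map_sum]
    simp [hsymm _ (u _), hu.apply_eq_zero _ _ (hu.proj V).2]
  have htgV := htg X hX _ (hu.proj V).2 Z hZ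
  conv_lhs => rw [hV]
  simp only [lie_add, lie_sum, lie_smul, map_add, map_sum, map_smul, LinearMap.add_apply,
    LinearMap.sum_apply, LinearMap.smul_apply, smul_eq_mul]
  linarith

variable [FiniteDimensional ℝ L] [LieRing.IsNilpotent L]

theorem sum_apply_lie_eq_zero_of_mem (hu : IsParsevalFrameOfOrthogonal β h.toSubmodule u)
    {z : L} (hz : z ∈ h) : ∑ i, β (u i) ⁅z, u i⁆ = 0 := by
  have hnil : IsNilpotent (LieAlgebra.ad ℝ L z) :=
    LieModule.isNilpotent_toEnd_of_isNilpotent ℝ L L z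
  have hrestrict : hu.proj ∘ₗ LieAlgebra.ad ℝ L z ∘ₗ h.toSubmodule.subtype =
      LieAlgebra.ad ℝ h ⟨z, hz⟩ := by
    ext w
    show ⁅z, (w : L)⁆ - frameOperator β u ⁅z, (w : L)⁆ = ⁅z, (w : L)⁆
    rw [hu.frameOperator_eq_zero (h.lie_mem hz w.2), sub_zero]
  have htrace_h : trace ℝ h.toSubmodule (LieAlgebra.ad ℝ h ⟨z, hz⟩) = 0 :=
    (isNilpotent_trace_of_isNilpotent (h.isNilpotent_ad_of_isNilpotent_ad hnil)).eq_zero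
  have := hu.trace_eq (LieAlgebra.ad ℝ L z)
  rwa [(isNilpotent_trace_of_isNilpotent hnil).eq_zero, hrestrict, htrace_h, zero_add,
    eq_comm] at this

theorem sum_apply_lie_eq_zero_of_orthogonal (hsymm : ∀ x y, β x y = β y x)
    (hpos : ∀ x, x ≠ 0 → 0 < β x x) (htg : h.IsTotallyGeodesic β)
    (hu : IsParsevalFrameOfOrthogonal β h.toSubmodule u) {z : L} (hz : ∀ w ∈ h, β z w = 0) :
    ∑ i, β (u i) ⁅z, u i⁆ = 0 := by
  have hnil : IsNilpotent (LieAlgebra.ad ℝ L z) :=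
    LieModule.isNilpotent_toEnd_of_isNilpotent ℝ L L z
  have hcompress :
      trace ℝ h.toSubmodule (hu.proj ∘ₗ LieAlgebra.ad ℝ L z ∘ₗ h.toSubmodule.subtype) = 0 := by
    refine trace_eq_zero_of_apply_self_eq_zero
      (β.compl₁₂ h.toSubmodule.subtype h.toSubmodule.subtype) (fun x y => hsymm x y)
      (fun x hx => hpos x (by simpa using hx)) _ fun w => ?_
    have hframe : β w (frameOperator β u ⁅z, (w : L)⁆) = 0 := by
      simp [hsymm w, hu.apply_eq_zero _ _ w.2]
    have hgeod := htg z hz w w.2 w w.2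
    show β w (⁅z, (w : L)⁆ - frameOperator β u ⁅z, (w : L)⁆) = 0
    rw [map_sub, hframe, sub_zero, hsymm]
    linarith
  have := hu.trace_eq (LieAlgebra.ad ℝ L z)
  rwa [(isNilpotent_trace_of_isNilpotent hnil).eq_zero, hcompress, zero_add, eq_comm] at this

variable {u : Fin 2 → L}

theorem lie_mem (hsymm : ∀ x y, β x y = β y x) (hpos : ∀ x, x ≠ 0 → 0 < β x x)
    (htg : h.IsTotallyGeodesic β) (hu : IsParsevalFrameOfOrthogonal β h.toSubmodule u) :
    ⁅u 0, u 1⁆ ∈ h := by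
  have h0 := hu.sum_apply_lie_eq_zero_of_orthogonal hsymm hpos htg (hu.apply_eq_zero 0)
  have h1 := hu.sum_apply_lie_eq_zero_of_orthogonal hsymm hpos htg (hu.apply_eq_zero 1)
  rw [Fin.sum_univ_two, lie_self, map_zero, zero_add] at h0
  rw [Fin.sum_univ_two, lie_self, map_zero, add_zero, ← lie_skew, map_neg, neg_eq_zero] at h1
  simpa [Fin.sum_univ_two, h0, h1] using hu.sub_frameOperator_mem ⁅u 0, u 1⁆

theorem apply_lie_lie_eq (hsymm : ∀ x y, β x y = β y x) (htg : h.IsTotallyGeodesic β)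
    (hu : IsParsevalFrameOfOrthogonal β h.toSubmodule u) {Y Z : L} (hY : Y ∈ h) (hZ : Z ∈ h) :
    β ⁅⁅u 0, u 1⁆, Y⁆ Z = β (hu.proj ⁅u 0, Y⁆) (hu.proj ⁅u 1, Z⁆)
      - β (hu.proj ⁅u 1, Y⁆) (hu.proj ⁅u 0, Z⁆) := by
  have htrace := hu.sum_apply_lie_eq_zero_of_mem hY
  rw [Fin.sum_univ_two, ← lie_skew Y (u 0), ← lie_skew Y (u 1), map_neg, map_neg] at htrace
  rw [lie_lie, map_sub, LinearMap.sub_apply,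
    hu.apply_lie_eq hsymm htg (hu.apply_eq_zero 0) _ hZ,
    hu.apply_lie_eq hsymm htg (hu.apply_eq_zero 1) _ hZ]
  simp only [Fin.sum_univ_two, lie_self, map_zero, LinearMap.zero_apply, mul_zero,
    ← lie_skew (u 1) (u 0), map_neg, LinearMap.neg_apply]
  linear_combination (-β ⁅u 0, u 1⁆ Z) * htrace

theorem apply_lie_skew (hsymm : ∀ x y, β x y = β y x) (htg : h.IsTotallyGeodesic β)
    (hu : IsParsevalFrameOfOrthogonal β h.toSubmodule u) {Y Z : L} (hY : Y ∈ h) (hZ : Z ∈ h) :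
    β ⁅⁅u 0, u 1⁆, Y⁆ Z = -β Y ⁅⁅u 0, u 1⁆, Z⁆ := by
  rw [hsymm Y, hu.apply_lie_lie_eq hsymm htg hY hZ, hu.apply_lie_lie_eq hsymm htg hZ hY,
    hsymm (hu.proj ⁅u 0, Z⁆), hsymm (hu.proj ⁅u 1, Z⁆)]
  ring

theorem lie_lie_eq_zero (hsymm : ∀ x y, β x y = β y x) (hpos : ∀ x, x ≠ 0 → 0 < β x x)
    (htg : h.IsTotallyGeodesic β) (hu : IsParsevalFrameOfOrthogonal β h.toSubmodule u) {Y : L}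
    (hY : Y ∈ h) : ⁅⁅u 0, u 1⁆, Y⁆ = 0 := by
  let c : h := ⟨⁅u 0, u 1⁆, hu.lie_mem hsymm hpos htg⟩
  have hnil : IsNilpotent (LieAlgebra.ad ℝ h c) :=
    h.isNilpotent_ad_of_isNilpotent_ad (LieModule.isNilpotent_toEnd_of_isNilpotent ℝ L L c)
  have hc : LieAlgebra.ad ℝ h c = 0 :=
    eq_zero_of_isNilpotent_of_apply_skew (β.compl₁₂ (h.incl : h →ₗ[ℝ] L) h.incl)
      (fun x hx => hpos x (by simpa using hx)) hnil
      (fun Y Z => hu.apply_lie_skew hsymm htg Y.2 Z.2)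
  simpa [c] using congr(($hc ⟨Y, hY⟩ : L))

end IsParsevalFrameOfOrthogonal

end Lie

theorem codim_two_bracket_central_general
    (g : Type*) [LieRing g] [LieAlgebra ℝ g] [FiniteDimensional ℝ g]
    [LieRing.IsNilpotent g]
    (B : g →ₗ[ℝ] g →ₗ[ℝ] ℝ)
    (hsymm : ∀ x y : g, B x y = B y x)
    (hpos : ∀ x : g, x ≠ 0 → 0 < B x x)
    (h : LieSubalgebra ℝ g)
    (hcodim : Module.finrank ℝ h + 2 = Module.finrank ℝ g)
    (htg : ∀ X : g, (∀ W ∈ h, B X W = 0) →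
      ∀ Y ∈ h, ∀ Z ∈ h, B ⁅X, Y⁆ Z + B ⁅X, Z⁆ Y = 0)
    (X₁ X₂ : g)
    (hX₁ : ∀ W ∈ h, B X₁ W = 0) (hX₂ : ∀ W ∈ h, B X₂ W = 0) :
    ⁅X₁, X₂⁆ ∈ h ∧ ∀ Y ∈ h, ⁅⁅X₁, X₂⁆, Y⁆ = 0 := by
  obtain ⟨u, hu⟩ := exists_isParsevalFrameOfOrthogonal B hsymm hpos h.toSubmodule hcodim
  have hexpand : ∀ X, (∀ W ∈ h, B X W = 0) → X = B (u 0) X • u 0 + B (u 1) X • u 1 := by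
    intro X hX
    have := hu.frameOperator_eq_self hpos hX
    rwa [frameOperator_apply, Fin.sum_univ_two, eq_comm] at this
  rw [hexpand X₁ hX₁, hexpand X₂ hX₂, lie_smul_add_smul_smul_add_smul]
  exact ⟨h.smul_mem _ (hu.lie_mem hsymm hpos htg),
    fun Y hY => by rw [smul_lie, hu.lie_lie_eq_zero hsymm hpos htg hY, smul_zero]⟩

/-- If `h` is a codimension-two totally geodesic subalgebra of a nilpotent
metric Lie algebra `g`, then for every basis `{X₁, X₂}` of `h⊥`, the bracket `[X₁,X₂]`
lies in `h` and is central in `h`. -/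
theorem codim_two_bracket_central
    (g : Type*) [LieRing g] [LieAlgebra ℝ g] [FiniteDimensional ℝ g]
    [LieRing.IsNilpotent g]
    (B : g →ₗ[ℝ] g →ₗ[ℝ] ℝ)
    (hsymm : ∀ x y : g, B x y = B y x)
    (hpos : ∀ x : g, x ≠ 0 → 0 < B x x)
    (h : LieSubalgebra ℝ g)
    (hcodim : Module.finrank ℝ h + 2 = Module.finrank ℝ g)
    (htg : ∀ X : g, (∀ W ∈ h, B X W = 0) →
      ∀ Y ∈ h, ∀ Z ∈ h, B ⁅X, Y⁆ Z + B ⁅X, Z⁆ Y = 0)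
    (X₁ X₂ : g)
    (hX₁ : ∀ W ∈ h, B X₁ W = 0) (hX₂ : ∀ W ∈ h, B X₂ W = 0)
    (hindep : LinearIndependent ℝ ![X₁, X₂])
    (hspan : ∀ X : g, (∀ W ∈ h, B X W = 0) → X ∈ Submodule.span ℝ {X₁, X₂}) :
    ⁅X₁, X₂⁆ ∈ h ∧ ∀ Y ∈ h, ⁅⁅X₁, X₂⁆, Y⁆ = 0 :=
  codim_two_bracket_central_general g B hsymm hpos h hcodim htg X₁ X₂ hX₁ hX₂
end

section
/- Let 𝔤 be a filiform nilpotent real Lie algebra of dimension n ≥ 5 with a basis {X₁,…,Xₙ} satisfying the Vergne relations with parameter α ∈ ℝ, namely (with Xᵢ = 0 for i > n and 𝔤ₖ = Span(Xₖ,…,Xₙ)): [X₁,Xᵢ] = X_{i+1} for i ≥ 2, [Xᵢ,Xⱼ] ∈ 𝔤_{i+j} for i + j ≠ n + 1, [Xᵢ,X_{n−i+1}] = (−1)ⁱ α Xₙ for 2 ≤ i ≤ n − 1, and α = 0 if n is odd. If X = Σ_{i=1}^{n} aᵢXᵢ, then X has maximal nilpotency (i.e. ad(X)^{n−2} ≠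 0) if and only if a₁ ≠ 0 and α a₂ ≠ −a₁. -/
/-!
Write `D = ad X` and `𝔤ₘ = span(Xₘ, …, Xₙ)`. The Vergne relations give `D 𝔤ₘ ⊆ 𝔤ₘ₊₁` for
`m ≥ 2`, and more precisely `D Xₘ ≡ a₁ Xₘ₊₁ (mod 𝔤ₘ₊₂)` for `2 ≤ m ≤ n - 2`,
`D Xₙ₋₁ = (a₁ + α a₂) Xₙ` and `D X₁ ≡ -a₂ X₃ (mod 𝔤₄)`. Since `D^(n-2)` kills `𝔤₃`, it is
determined by `D^(n-2) X₂ = a₁ c Xₙ` and `D^(n-2) X₁ = -a₂ c Xₙ`, where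
`c = a₁ⁿ⁻⁴ (a₁ + α a₂)`; so `D^(n-2) ≠ 0` iff `c ≠ 0`, which for `n ≥ 5` is the claimed condition.
-/

open Finset LieAlgebra

section TailSpan

variable (R : Type*) {M : Type*} [CommRing R] [AddCommGroup M] [Module R M]

/-- The paper's `𝔤ₘ = Span(Xₘ, …, Xₙ)`. -/
def tailSpan (X : ℕ → M) (n m : ℕ) : Submodule R M :=
  Submodule.span R (X '' Set.Icc m n)

variable {R} {X : ℕ → M} {n : ℕ}

theorem tailSpan_antitone {p q : ℕ} (h : p ≤ q) : tailSpan R X n q ≤ tailSpan R X n p :=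
  Submodule.span_mono (Set.image_mono (Set.Icc_subset_Icc h le_rfl))

theorem tailSpan_eq_bot {m : ℕ} (h : n < m) : tailSpan R X n m = ⊥ := by
  simp [tailSpan, Set.Icc_eq_empty_of_lt h]

theorem pow_apply_mem_tailSpan {f : Module.End R M} {m₀ : ℕ}
    (hf : ∀ k, m₀ ≤ k → k ≤ n → f (X k) ∈ tailSpan R X n (k + 1)) (j : ℕ) :
    ∀ m, m₀ ≤ m → ∀ v ∈ tailSpan R X n m, (f ^ j) v ∈ tailSpan R X n (m + j) := by
  induction j with
  | zero => intro m _ v hv; simpa using hv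
  | succ j ih =>
    intro m hm v hv
    have hfv : f v ∈ tailSpan R X n (m + 1) := by
      refine (Submodule.span_le.mpr ?_ : tailSpan R X n m ≤ (tailSpan R X n (m + 1)).comap f) hv
      rintro _ ⟨k, hk, rfl⟩
      exact tailSpan_antitone (Nat.succ_le_succ hk.1) (hf k (hm.trans hk.1) hk.2)
    rw [pow_succ, Module.End.mul_apply, ← add_assoc, add_right_comm]
    exact ih (m + 1) (by omega) _ hfv

theorem pow_apply_eq_zero_of_mem_tailSpan {f : Module.End R M} {m₀ m j : ℕ}
    (hf : ∀ k, m₀ ≤ k → k ≤ n → f (X k) ∈ tailSpan R X n (k + 1)) (hm : m₀ ≤ m) (hj : n < m + j)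
    {v : M} (hv : v ∈ tailSpan R X n m) : (f ^ j) v = 0 := by
  simpa [tailSpan_eq_bot hj] using pow_apply_mem_tailSpan hf j m hm v hv

end TailSpan

theorem sum_smul_lie_sub_mem {R L ι : Type*} [CommRing R] [LieRing L] [LieAlgebra R L]
    [DecidableEq ι] {s : Finset ι} {j : ι} (hj : j ∈ s) (a : ι → R) (x : ι → L) (v : L)
    {S : Submodule R L} (hS : ∀ i ∈ s, i ≠ j → ⁅x i, v⁆ ∈ S) :
    ⁅∑ i ∈ s, a i • x i, v⁆ - a j • ⁅x j, v⁆ ∈ S := by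
  rw [sum_lie, ← add_sum_erase s _ hj, smul_lie, add_sub_cancel_left]
  refine Submodule.sum_mem _ fun i hi ↦ ?_
  rw [smul_lie]
  exact S.smul_mem _ (hS i (mem_of_mem_erase hi) (ne_of_mem_erase hi))

structure VergneRelations {R L : Type*} [CommRing R] [LieRing L] [LieAlgebra R L]
    (X : ℕ → L) (n : ℕ) (α : R) : Prop where
  eq_zero : ∀ i, n < i → X i = 0
  lie_one : ∀ i, 2 ≤ i → ⁅X 1, X i⁆ = X (i + 1)
  lie_mem : ∀ i j, 1 ≤ i → 1 ≤ j → i + j ≠ n + 1 → ⁅X i, X j⁆ ∈ tailSpan R X n (i + j)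
  lie_compl : ∀ i, 2 ≤ i → i ≤ n - 1 → ⁅X i, X (n - i + 1)⁆ = ((-1 : R) ^ i * α) • X n

namespace VergneRelations

variable {R L : Type*} [CommRing R] [LieRing L] [LieAlgebra R L] {X : ℕ → L} {n : ℕ} {α : R}
  (hV : VergneRelations X n α) (a : ℕ → R)
include hV

theorem mem_tailSpan {m k : ℕ} (h : m ≤ k) : X k ∈ tailSpan R X n m := by
  rcases le_or_gt k n with hkn | hkn
  · exact Submodule.subset_span ⟨k, ⟨h, hkn⟩, rfl⟩
  · simp [hV.eq_zero k hkn]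

theorem lie_eq_zero_of_lt {i j : ℕ} (hi : 1 ≤ i) (hj : 1 ≤ j) (h : n + 1 < i + j) :
    ⁅X i, X j⁆ = 0 := by
  simpa [tailSpan_eq_bot (R := R) (X := X) (show n < i + j by omega)] using
    hV.lie_mem i j hi hj h.ne'

/-- The exceptional brackets `[Xᵢ, X_{n-i+1}] = ±α Xₙ` lie in `𝔤ₚ` only for `p ≤ n`. -/
theorem lie_mem_tailSpan {i j p : ℕ} (hi : 2 ≤ i) (hj : 2 ≤ j) (hp : p ≤ i + j)
    (hpn : i + j = n + 1 → p ≤ n) : ⁅X i, X j⁆ ∈ tailSpan R X n p := by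
  by_cases hc : i + j = n + 1
  · obtain rfl : j = n - i + 1 := by omega
    rw [hV.lie_compl i hi (by omega)]
    exact Submodule.smul_mem _ _ (hV.mem_tailSpan (hpn hc))
  · exact tailSpan_antitone hp (hV.lie_mem i j (by omega) (by omega) hc)

local notation "D" => ad R L (∑ i ∈ Icc 1 n, a i • X i)

theorem ad_apply_mem_tailSpan {k : ℕ} (hk : 2 ≤ k) :
    D (X k) ∈ tailSpan R X n (k + 1) := by
  rw [ad_apply, sum_lie]
  refine Submodule.sum_mem _ fun i hi ↦ ?_
  obtain ⟨hi1, -⟩ := mem_Icc.mp hi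
  rw [smul_lie]
  refine Submodule.smul_mem _ _ ?_
  rcases hi1.eq_or_lt with rfl | hi2
  · rw [hV.lie_one k hk]
    exact hV.mem_tailSpan le_rfl
  · exact hV.lie_mem_tailSpan hi2 hk (by omega) (by omega)

theorem ad_apply_sub_mem_tailSpan {m : ℕ} (hm : 2 ≤ m) (hmn : m + 2 ≤ n) :
    D (X m) - a 1 • X (m + 1) ∈ tailSpan R X n (m + 2) := by
  rw [ad_apply, ← hV.lie_one m hm]
  refine sum_smul_lie_sub_mem (mem_Icc.mpr ⟨le_rfl, by omega⟩) a X _ fun i hi hi1 ↦ ?_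
  have hi2 : 2 ≤ i := by grind
  exact hV.lie_mem_tailSpan hi2 hm (by omega) (fun _ ↦ hmn)

theorem ad_apply_one_add_mem_tailSpan (hn : 2 ≤ n) :
    D (X 1) + a 2 • X 3 ∈ tailSpan R X n 4 := by
  have h21 : ⁅X 2, X 1⁆ = -X 3 := by rw [← lie_skew, hV.lie_one 2 le_rfl]
  rw [ad_apply, ← sub_neg_eq_add, ← smul_neg, ← h21]
  refine sum_smul_lie_sub_mem (mem_Icc.mpr ⟨by omega, hn⟩) a X _ fun i hi hi2 ↦ ?_
  rcases (mem_Icc.mp hi).1.eq_or_lt with rfl | hi1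
  · simp
  · rw [← lie_skew, hV.lie_one i hi1]
    exact neg_mem (hV.mem_tailSpan (by omega))

theorem ad_apply_pred (hn : 3 ≤ n) : D (X (n - 1)) = (a 1 + α * a 2) • X n := by
  have h1 : ⁅X 1, X (n - 1)⁆ = X n := by
    rw [hV.lie_one _ (by omega), Nat.sub_add_cancel (by omega)]
  have h2 : ⁅X 2, X (n - 1)⁆ = α • X n := by
    simpa [show n - 2 + 1 = n - 1 by omega] using hV.lie_compl 2 le_rfl (by omega)
  rw [ad_apply, sum_lie, sum_eq_add_of_mem 1 2 (by simp; omega) (by simp; omega) (by decide),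
    smul_lie, smul_lie, h1, h2, smul_smul, ← add_smul, mul_comm]
  rintro i hi ⟨hi1, hi2⟩
  rw [smul_lie, hV.lie_eq_zero_of_lt (mem_Icc.mp hi).1 (by omega) (by grind), smul_zero]

theorem ad_pow_apply_eq_zero_of_mem_tailSpan {m j : ℕ} (hm : 2 ≤ m) (hj : n < m + j) {v : L}
    (hv : v ∈ tailSpan R X n m) : (D ^ j) v = 0 :=
  pow_apply_eq_zero_of_mem_tailSpan (fun _ hk _ ↦ hV.ad_apply_mem_tailSpan a hk) hm hj hv

theorem ad_pow_succ_apply (j : ℕ) (hj : j + 3 ≤ n) :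
    (D ^ (j + 1)) (X (n - 1 - j)) = (a 1 ^ j * (a 1 + α * a 2)) • X n := by
  induction j with
  | zero => simpa using hV.ad_apply_pred a (by omega)
  | succ j ih =>
    set k := n - 1 - (j + 1)
    have hk : k + 1 = n - 1 - j := by omega
    have htail : (D ^ (j + 1)) (D (X k) - a 1 • X (k + 1)) = 0 :=
      hV.ad_pow_apply_eq_zero_of_mem_tailSpan a (by omega) (by omega)
        (hV.ad_apply_sub_mem_tailSpan a (by omega) (by omega))
    rw [map_sub, map_smul, sub_eq_zero, hk, ih (by omega), smul_smul] at htail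
    rw [pow_succ, Module.End.mul_apply, htail]
    congr 1
    ring

theorem ad_pow_apply_one (hn : 4 ≤ n) :
    (D ^ (n - 2)) (X 1) = -(a 2 * (a 1 ^ (n - 4) * (a 1 + α * a 2))) • X n := by
  have h3 : (D ^ (n - 3)) (X 3) = (a 1 ^ (n - 4) * (a 1 + α * a 2)) • X n := by
    simpa [show n - 4 + 1 = n - 3 by omega, show n - 1 - (n - 4) = 3 by omega] using
      hV.ad_pow_succ_apply a (n - 4) (by omega)
  have htail : (D ^ (n - 3)) (D (X 1) + a 2 • X 3) = 0 :=
    hV.ad_pow_apply_eq_zero_of_mem_tailSpan a (by omega) (by omega)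
      (hV.ad_apply_one_add_mem_tailSpan a (by omega))
  rw [map_add, map_smul, h3, add_eq_zero_iff_eq_neg] at htail
  rw [show n - 2 = n - 3 + 1 by omega, pow_succ, Module.End.mul_apply, htail, neg_smul, smul_smul]

theorem ad_pow_apply_two (hn : 4 ≤ n) :
    (D ^ (n - 2)) (X 2) = (a 1 * (a 1 ^ (n - 4) * (a 1 + α * a 2))) • X n := by
  rw [← mul_assoc, ← pow_succ', show n - 4 + 1 = n - 3 by omega]
  simpa [show n - 3 + 1 = n - 2 by omega, show n - 1 - (n - 3) = 2 by omega] using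
    hV.ad_pow_succ_apply a (n - 3) (by omega)

theorem ad_pow_apply_of_three_le {m : ℕ} (hm : 3 ≤ m) : (D ^ (n - 2)) (X m) = 0 :=
  hV.ad_pow_apply_eq_zero_of_mem_tailSpan a (by omega) (by omega) (hV.mem_tailSpan le_rfl)

theorem ad_pow_eq_zero_iff [IsDomain R] (hn : 4 ≤ n) (b : Module.Basis (Fin n) R L)
    (hb : ∀ i : Fin n, b i = X (i + 1)) :
    D ^ (n - 2) = 0 ↔ a 1 ^ (n - 4) * (a 1 + α * a 2) = 0 := by
  set c := a 1 ^ (n - 4) * (a 1 + α * a 2) with hc_def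
  have hXn : X n ≠ 0 := by
    simpa [hb, Nat.sub_add_cancel (show 1 ≤ n by omega)] using b.ne_zero ⟨n - 1, by omega⟩
  have eq_zero_of_smul {r : R} (h : r • X n = 0) : r = 0 := (b.smul_eq_zero.mp h).resolve_right hXn
  constructor
  · intro hD
    have h1 : a 2 * c = 0 := by
      have h := hV.ad_pow_apply_one a hn
      rw [hD, LinearMap.zero_apply, eq_comm, neg_smul, neg_eq_zero] at h
      exact eq_zero_of_smul h
    have h2 : a 1 * c = 0 := by
      have h := hV.ad_pow_apply_two a hn
      rw [hD, LinearMap.zero_apply, eq_comm] at h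
      exact eq_zero_of_smul h
    -- `a₁ c = a₂ c = 0` forces `c² = a₁ⁿ⁻⁴ (a₁ + α a₂) c = 0`
    have hc2 : c ^ 2 = 0 := by linear_combination (a 1 ^ (n - 4)) * (h2 + α * h1)
    exact pow_eq_zero_iff two_ne_zero |>.mp hc2
  · intro hc
    refine b.ext fun i ↦ ?_
    rw [hb, LinearMap.zero_apply]
    obtain h | h | h : i.1 + 1 = 1 ∨ i.1 + 1 = 2 ∨ 3 ≤ i.1 + 1 := by omega
    · rw [h, hV.ad_pow_apply_one a hn, ← hc_def, hc]; simp
    · rw [h, hV.ad_pow_apply_two a hn, ← hc_def, hc]; simp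
    · exact hV.ad_pow_apply_of_three_le a h

end VergneRelations

theorem maximal_nilpotency_iff_general
    (g : Type*) [LieRing g] [LieAlgebra ℝ g]
    (n : ℕ) (hn5 : 5 ≤ n)
    (X : ℕ → g) (α : ℝ)
    (hbasis : ∃ b : Module.Basis (Fin n) ℝ g, ∀ i : Fin n, b i = X (i.1 + 1))
    (hzero : ∀ i : ℕ, n < i → X i = 0)
    (hrel1 : ∀ i : ℕ, 2 ≤ i → ⁅X 1, X i⁆ = X (i + 1))
    (hrel2 : ∀ i j : ℕ, 1 ≤ i → 1 ≤ j → i + j ≠ n + 1 →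
      ⁅X i, X j⁆ ∈ Submodule.span ℝ (X '' Set.Icc (i + j) n))
    (hrel3 : ∀ i : ℕ, 2 ≤ i → i ≤ n - 1 →
      ⁅X i, X (n - i + 1)⁆ = ((-1 : ℝ) ^ i * α) • X n)
    (a : ℕ → ℝ) :
    (LieAlgebra.ad ℝ g (∑ i ∈ Finset.Icc 1 n, a i • X i)) ^ (n - 2) ≠ 0 ↔
      (a 1 ≠ 0 ∧ α * a 2 ≠ -(a 1)) := by
  obtain ⟨b, hb⟩ := hbasis
  have hV : VergneRelations X n α := ⟨hzero, hrel1, hrel2, hrel3⟩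
  rw [Ne, hV.ad_pow_eq_zero_iff a (by omega) b hb, mul_eq_zero, pow_eq_zero_iff (by omega),
    add_comm, ← eq_neg_iff_add_eq_zero, not_or]

/-- In a filiform nilpotent Lie algebra of dimension `n ≥ 5` with a basis
satisfying the Vergne relations with parameter `α`, an element `X = Σ aᵢXᵢ` has maximal
nilpotency (`ad(X)^(n-2) ≠ 0`) iff `a₁ ≠ 0` and `α a₂ ≠ -a₁`. -/
theorem maximal_nilpotency_iff
    (g : Type*) [LieRing g] [LieAlgebra ℝ g] [FiniteDimensional ℝ g]
    [LieRing.IsNilpotent g]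
    (n : ℕ) (hn5 : 5 ≤ n) (hn : Module.finrank ℝ g = n)
    (X : ℕ → g) (α : ℝ)
    (hbasis : ∃ b : Module.Basis (Fin n) ℝ g, ∀ i : Fin n, b i = X (i.1 + 1))
    (hzero : ∀ i : ℕ, n < i → X i = 0)
    (hrel1 : ∀ i : ℕ, 2 ≤ i → ⁅X 1, X i⁆ = X (i + 1))
    (hrel2 : ∀ i j : ℕ, 1 ≤ i → 1 ≤ j → i + j ≠ n + 1 →
      ⁅X i, X j⁆ ∈ Submodule.span ℝ (X '' Set.Icc (i + j) n))
    (hrel3 : ∀ i : ℕ, 2 ≤ i → i ≤ n - 1 →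
      ⁅X i, X (n - i + 1)⁆ = ((-1 : ℝ) ^ i * α) • X n)
    (hrel4 : Odd n → α = 0)
    (a : ℕ → ℝ) :
    (LieAlgebra.ad ℝ g (∑ i ∈ Finset.Icc 1 n, a i • X i)) ^ (n - 2) ≠ 0 ↔
      (a 1 ≠ 0 ∧ α * a 2 ≠ -(a 1)) :=
  maximal_nilpotency_iff_general g n hn5 X α hbasis hzero hrel1 hrel2 hrel3 a
end
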